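/- arXiv:2010.14941 — 2 statements merged into one kernel-verified Lean document; each statement's English description precedes it below -/
import Mathlib

section
/- For every integer n ≥ 0, the sum over monic polynomials f of degree n in A of the ordinary divisor function evaluated at f² is given exactly by: ∑_{f monic, deg f = n} d_2(f²) = (1 + (1/2)(3 + q^{−1})·n + (1/2)(1 − q^{−1})·n²) · q^n. -/
open Polynomial
open scoped Classical

noncomputable section

variable (F : Type) [Field F] [Fintype F]

/-- The set of monic irreducible polynomials of degree `n` over `F`. -/
def primesDeg (n : ℕ) : Set (Polynomial F) :=
  {P | P.Monic ∧ Irreducible P ∧ P.natDegree = n}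

/-- The norm `|f| = q ^ deg f` as a real number. -/
def pnorm (f : Polynomial F) : ℝ := (Fintype.card F : ℝ) ^ f.natDegree

/-- The quadratic character `χ_P` modulo a monic irreducible `P`. -/
def chiP (P f : Polynomial F) : ℝ :=
  if Ideal.Quotient.mk (Ideal.span {P}) f = 0 then 0
  else if IsSquare (Ideal.Quotient.mk (Ideal.span {P}) f) then 1 else -1

/-- `d_k(f)`: the number of ordered `k`-tuples of monic polynomials whose product is `f`. -/
def dk (k : ℕ) (f : Polynomial F) : ℕ :=
  Nat.card {t : Fin k → Polynomial F // (∀ i, (t i).Monic) ∧ ∏ i, t i = f}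

/-- `L(1, χ_P)`. -/
def L1 (P : Polynomial F) : ℝ :=
  ∑ m ∈ Finset.range P.natDegree,
    (Fintype.card F : ℝ) ^ (-(m : ℤ)) *
      ∑ᶠ f ∈ {f : Polynomial F | f.Monic ∧ f.natDegree = m}, chiP F P f

/-- The generalized divisor function `d_z` for complex `z`. -/
def dz (z : ℂ) (f : Polynomial F) : ℂ :=
  ∏ Q ∈ (UniqueFactorizationMonoid.normalizedFactors f).toFinset,
    (∏ j ∈ Finset.range ((UniqueFactorizationMonoid.normalizedFactors f).count Q), (z + (j : ℂ))) /
      ((Nat.factorial ((UniqueFactorizationMonoid.normalizedFactors f).count Q) : ℕ) : ℂ)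

/-!
Write a factorization `a * b = f ^ 2` into monic polynomials as `a = d * s ^ 2`, `b = d * t ^ 2`
with `d = gcd a b` and `s`, `t` coprime, so that `f = d * s * t`. As `f` runs over the monic
polynomials of degree `n`, these factorizations correspond to the triples `(d, s, t)` of monic
polynomials with `s`, `t` coprime and total degree `n`; let `C n` be their number. Splitting off
`g = gcd S T` from an arbitrary monic triple `(d, S, T)` shows that the number
`A n = (n + 1) * (n + 2) / 2 * q ^ n` of all monic triples of total degree `n` is
`∑ k, q ^ k * C (n - 2 * k)`, hence `C n = A n - q * A (n - 2)`, which is the formula.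
-/

open Finset

theorem IsCoprime.dvd_of_dvd_mul_of_dvd_mul {R : Type*} [CommSemiring R] {x y u v : R}
    (huv : IsCoprime u v) (hu : x ∣ y * u) (hv : x ∣ y * v) : x ∣ y := by
  obtain ⟨a, b, hab⟩ := huv
  have hy : y = a * (y * u) + b * (y * v) := by
    calc y = y * (a * u + b * v) := by rw [hab, mul_one]
      _ = a * (y * u) + b * (y * v) := by ring
  exact hy ▸ (hu.mul_left a).add (hv.mul_left b)

theorem ncard_setOf_prod_weight_eq_sum_antidiagonal {α β : Type*} {P : α → Prop} {Q : β → Prop}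
    {v : α → ℕ} {w : β → ℕ} (hP : ∀ i, {a | P a ∧ v a = i}.Finite)
    (hQ : ∀ j, {b | Q b ∧ w b = j}.Finite) (n : ℕ) :
    {x : α × β | (P x.1 ∧ Q x.2) ∧ v x.1 + w x.2 = n}.ncard =
      ∑ ij ∈ antidiagonal n, {a | P a ∧ v a = ij.1}.ncard * {b | Q b ∧ w b = ij.2}.ncard := by
  have hunion : {x : α × β | (P x.1 ∧ Q x.2) ∧ v x.1 + w x.2 = n} =
      ⋃ ij ∈ (antidiagonal n : Set (ℕ × ℕ)), {a | P a ∧ v a = ij.1} ×ˢ {b | Q b ∧ w b = ij.2} := by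
    ext ⟨a, b⟩
    simp only [Set.mem_ofPred_eq, Set.mem_iUnion, Set.mem_prod, Finset.mem_coe,
      Finset.HasAntidiagonal.mem_antidiagonal, exists_prop, Prod.exists]
    constructor
    · rintro ⟨⟨ha, hb⟩, rfl⟩
      exact ⟨_, _, rfl, ⟨ha, rfl⟩, hb, rfl⟩
    · rintro ⟨i, j, rfl, ⟨ha, rfl⟩, hb, rfl⟩
      exact ⟨⟨ha, hb⟩, rfl⟩
  have hdisj : (antidiagonal n : Set (ℕ × ℕ)).PairwiseDisjoint
      fun ij => {a | P a ∧ v a = ij.1} ×ˢ {b | Q b ∧ w b = ij.2} := by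
    rintro ⟨i, j⟩ - ⟨k, l⟩ - hne
    refine Set.disjoint_left.2 fun x hx hx' => hne ?_
    simp only [Set.mem_prod, Set.mem_ofPred_eq] at hx hx'
    rw [← hx.1.2, ← hx.2.2, hx'.1.2, hx'.2.2]
  rw [hunion, Set.Finite.ncard_biUnion (Finset.finite_toSet _) (fun ij _ => (hP _).prod (hQ _))
    hdisj, finsum_mem_coe_finset]
  simp only [Set.ncard_prod]

theorem Set.Finite.finsum_ncard_eq_ncard_setOf_prod {α β : Type*} {S : Set α} (hS : S.Finite)
    {T : α → Set β} (hT : ∀ a ∈ S, (T a).Finite) :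
    ∑ᶠ a ∈ S, (T a).ncard = {x : α × β | x.1 ∈ S ∧ x.2 ∈ T x.1}.ncard := by
  have hunion : {x : α × β | x.1 ∈ S ∧ x.2 ∈ T x.1} = ⋃ a ∈ S, {a} ×ˢ T a := by
    ext ⟨a, b⟩
    simp
  have hdisj : S.PairwiseDisjoint fun a => ({a} : Set α) ×ˢ T a := fun a _ a' _ hne =>
    disjoint_left.2 fun x hx hx' => hne ((mem_singleton_iff.1 (mem_prod.1 hx).1).symm.trans
      (mem_singleton_iff.1 (mem_prod.1 hx').1))
  rw [hunion, hS.ncard_biUnion (fun a ha => (finite_singleton a).prod (hT a ha)) hdisj]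
  simp only [ncard_prod, ncard_singleton, one_mul]

section Factorization

variable {K : Type*} [Field K]

namespace Polynomial

theorem Monic.eq_of_pow_eq_pow {p q : K[X]} (hp : p.Monic) (hq : q.Monic) {n : ℕ} (hn : n ≠ 0)
    (h : p ^ n = q ^ n) : p = q :=
  eq_of_monic_of_associated hp hq <| associated_of_dvd_dvd
    ((UniqueFactorizationMonoid.pow_dvd_pow_iff_dvd hn).1 h.dvd)
    ((UniqueFactorizationMonoid.pow_dvd_pow_iff_dvd hn).1 h.symm.dvd)

theorem Monic.exists_monic_pow_eq_of_mul_eq_pow {a b c : K[X]} (ha : a.Monic)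
    (hab : IsCoprime a b) {n : ℕ} (hn : n ≠ 0) (h : a * b = c ^ n) :
    ∃ s : K[X], s.Monic ∧ s ^ n = a := by
  obtain ⟨s, hs⟩ := exists_associated_pow_of_mul_eq_pow' hab h
  have hs0 : s ≠ 0 := by
    rintro rfl
    rw [zero_pow hn] at hs
    exact ha.ne_zero ((associated_zero_iff_eq_zero a).1 hs.symm)
  exact ⟨normalize s, monic_normalize hs0, (map_pow normalizeHom s n).symm.trans
    ((normalize_eq_normalize hs.dvd hs.symm.dvd).trans ha.normalize_eq_self)⟩

theorem Monic.exists_eq_mul_eq_mul_isCoprime {S T : K[X]} (hS : S.Monic) (hT : T.Monic) :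
    ∃ g s t : K[X], g.Monic ∧ s.Monic ∧ t.Monic ∧ IsCoprime s t ∧ S = g * s ∧ T = g * t := by
  obtain ⟨s, t, hs, ht, hst⟩ := extract_gcd S T
  have hg : (gcd S T).Monic := normalize_gcd S T ▸ monic_normalize (gcd_ne_zero_of_left hS.ne_zero)
  exact ⟨gcd S T, s, t, hg, hg.of_mul_monic_left (hs ▸ hS), hg.of_mul_monic_left (ht ▸ hT),
    (gcd_isUnit_iff s t).1 hst, hs, ht⟩

theorem Monic.eq_of_mul_eq_mul_of_isCoprime {g g' s t s' t' : K[X]} (hg : g.Monic)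
    (hg' : g'.Monic) (hst : IsCoprime s t) (hst' : IsCoprime s' t') (hs : g * s = g' * s')
    (ht : g * t = g' * t') : g = g' ∧ s = s' ∧ t = t' := by
  have hgg : g = g' := eq_of_monic_of_associated hg hg' <| associated_of_dvd_dvd
    (hst'.dvd_of_dvd_mul_of_dvd_mul (hs ▸ dvd_mul_right g s) (ht ▸ dvd_mul_right g t))
    (hst.dvd_of_dvd_mul_of_dvd_mul (hs.symm ▸ dvd_mul_right g' s') (ht.symm ▸ dvd_mul_right g' t'))
  subst hgg
  exact ⟨rfl, mul_left_cancel₀ hg.ne_zero hs, mul_left_cancel₀ hg.ne_zero ht⟩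

theorem Monic.exists_eq_mul_sq_of_mul_eq_sq {a b f : K[X]} (ha : a.Monic) (hb : b.Monic)
    (hf : f.Monic) (h : a * b = f ^ 2) :
    ∃ d s t : K[X], d.Monic ∧ s.Monic ∧ t.Monic ∧ IsCoprime s t ∧
      f = d * s * t ∧ a = d * s ^ 2 ∧ b = d * t ^ 2 := by
  obtain ⟨d, a₁, b₁, hd, ha₁, hb₁, hab₁, rfl, rfl⟩ := ha.exists_eq_mul_eq_mul_isCoprime hb
  have hd_dvd : d ∣ f :=
    (UniqueFactorizationMonoid.pow_dvd_pow_iff_dvd two_ne_zero).1 ⟨a₁ * b₁, by rw [← h]; ring⟩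
  obtain ⟨g, rfl⟩ := hd_dvd
  have hg : g.Monic := hd.of_mul_monic_left hf
  have hg2 : a₁ * b₁ = g ^ 2 :=
    mul_left_cancel₀ (pow_ne_zero 2 hd.ne_zero) (by linear_combination h)
  obtain ⟨s, hs, rfl⟩ := ha₁.exists_monic_pow_eq_of_mul_eq_pow hab₁ two_ne_zero hg2
  obtain ⟨t, ht, rfl⟩ := hb₁.exists_monic_pow_eq_of_mul_eq_pow hab₁.symm two_ne_zero
    (by rw [mul_comm, hg2])
  have hgst : g = s * t := hg.eq_of_pow_eq_pow (hs.mul ht) two_ne_zero (by rw [← hg2]; ring)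
  exact ⟨d, s, t, hd, hs, ht, IsCoprime.pow_iff two_pos two_pos |>.1 hab₁,
    by rw [hgst, mul_assoc], rfl, rfl⟩

end Polynomial

end Factorization

section Counting

variable {K : Type*} [Field K] [Fintype K]

theorem ncard_setOf_monic_natDegree_eq (n : ℕ) :
    {f : K[X] | f.Monic ∧ f.natDegree = n}.ncard = Fintype.card K ^ n := by
  have hdegLT : ((degreeLT K n : Submodule K K[X]) : Set K[X]).ncard = Fintype.card K ^ n := by
    rw [← Nat.card_coe_set_eq, SetLike.coe_sort_coe, Nat.card_congr (degreeLTEquiv K n).toEquiv,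
      Nat.card_fun, Nat.card_eq_fintype_card, Nat.card_fin]
  rw [← hdegLT]
  refine (Set.ncard_congr (fun g _ => X ^ n + g) (fun g hg => ?_)
    (fun g g' _ _ (h : (X : K[X]) ^ n + g = X ^ n + g') => add_left_cancel h) (fun f hf => ?_)).symm
  · have hlt : g.degree < n := mem_degreeLT.1 hg
    refine ⟨monic_X_pow_add hlt, ?_⟩
    rw [natDegree_add_eq_left_of_degree_lt (by rwa [degree_X_pow]), natDegree_X_pow]
  · obtain ⟨hf, rfl⟩ := hf
    refine ⟨f - X ^ f.natDegree, mem_degreeLT.2 ?_, add_sub_cancel _ _⟩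
    have h := degree_sub_lt_left (by rw [degree_X_pow, degree_eq_natDegree hf.ne_zero])
      hf.ne_zero (by rw [hf.leadingCoeff, (monic_X_pow _).leadingCoeff])
    rwa [degree_eq_natDegree hf.ne_zero] at h

theorem finite_setOf_monic_natDegree_eq (n : ℕ) : {f : K[X] | f.Monic ∧ f.natDegree = n}.Finite :=
  Set.finite_of_ncard_ne_zero (by rw [ncard_setOf_monic_natDegree_eq]; positivity)

theorem ncard_setOf_monic_two_mul_natDegree_eq (i : ℕ) :
    {g : K[X] | g.Monic ∧ 2 * g.natDegree = i}.ncard =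
      if Even i then Fintype.card K ^ (i / 2) else 0 := by
  split_ifs with hi
  · rw [← ncard_setOf_monic_natDegree_eq]
    congr 1
    ext g
    obtain ⟨k, rfl⟩ := hi
    exact and_congr_right fun _ => by omega
  · convert Set.ncard_empty K[X]
    refine Set.eq_empty_of_forall_notMem fun g ⟨_, hg⟩ => hi ⟨g.natDegree, ?_⟩
    omega

theorem finite_setOf_monic_two_mul_natDegree_eq (i : ℕ) :
    {g : K[X] | g.Monic ∧ 2 * g.natDegree = i}.Finite :=
  (finite_setOf_monic_natDegree_eq (i / 2)).subset fun _ ⟨hg, hi⟩ => ⟨hg, by omega⟩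

variable (K) in
def monicPairs (m : ℕ) : Set (K[X] × K[X]) :=
  {y | (y.1.Monic ∧ y.2.Monic) ∧ y.1.natDegree + y.2.natDegree = m}

theorem ncard_monicPairs (m : ℕ) : (monicPairs K m).ncard = (m + 1) * Fintype.card K ^ m := by
  rw [monicPairs, ncard_setOf_prod_weight_eq_sum_antidiagonal finite_setOf_monic_natDegree_eq
    finite_setOf_monic_natDegree_eq, Finset.sum_congr rfl fun ij hij => by
      rw [ncard_setOf_monic_natDegree_eq, ncard_setOf_monic_natDegree_eq, ← pow_add,
        mem_antidiagonal.1 hij], sum_const, Nat.card_antidiagonal, smul_eq_mul]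

theorem finite_monicPairs (m : ℕ) : (monicPairs K m).Finite :=
  Set.finite_of_ncard_ne_zero (by rw [ncard_monicPairs]; positivity)

theorem finite_setOf_monic_mul_eq (g : K[X]) :
    {p : K[X] × K[X] | p.1.Monic ∧ p.2.Monic ∧ p.1 * p.2 = g}.Finite :=
  (finite_monicPairs g.natDegree).subset fun _ ⟨h₁, h₂, h⟩ =>
    ⟨⟨h₁, h₂⟩, by rw [← h, h₁.natDegree_mul h₂]⟩

-- Bracketed as `deg d + (deg s + deg t)`: the weight of `K[X] × (K[X] × K[X])` as a product.
variable (K) in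
def monicTriples (n : ℕ) : Set (K[X] × K[X] × K[X]) :=
  {x | (x.1.Monic ∧ x.2.1.Monic ∧ x.2.2.Monic) ∧
    x.1.natDegree + (x.2.1.natDegree + x.2.2.natDegree) = n}

theorem two_mul_sum_antidiagonal_snd_add_one (n : ℕ) :
    2 * ∑ ij ∈ antidiagonal n, (ij.2 + 1) = (n + 1) * (n + 2) := by
  induction n with
  | zero => simp
  | succ n ih =>
    rw [Finset.Nat.sum_antidiagonal_succ, mul_add, ih]
    ring

theorem two_mul_ncard_monicTriples (n : ℕ) :
    2 * (monicTriples K n).ncard = (n + 1) * (n + 2) * Fintype.card K ^ n := by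
  have hsum : (monicTriples K n).ncard =
      ∑ ij ∈ antidiagonal n, (ij.2 + 1) * Fintype.card K ^ n :=
    (ncard_setOf_prod_weight_eq_sum_antidiagonal finite_setOf_monic_natDegree_eq
      finite_monicPairs n).trans <| sum_congr rfl fun ij hij => by
        rw [ncard_setOf_monic_natDegree_eq, ← mem_antidiagonal.1 hij, pow_add,
          show {b : K[X] × K[X] | _} = monicPairs K ij.2 from rfl, ncard_monicPairs]
        ring
  rw [hsum, ← sum_mul, ← mul_assoc, two_mul_sum_antidiagonal_snd_add_one]

variable (K) in
def coprimeTriples (n : ℕ) : Set (K[X] × K[X] × K[X]) :=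
  {x | (x.1.Monic ∧ x.2.1.Monic ∧ x.2.2.Monic ∧ IsCoprime x.2.1 x.2.2) ∧
    x.1.natDegree + (x.2.1.natDegree + x.2.2.natDegree) = n}

theorem finite_monicTriples (n : ℕ) : (monicTriples K n).Finite :=
  Set.finite_of_ncard_ne_zero fun h => by simpa [h] using two_mul_ncard_monicTriples (K := K) n

theorem finite_coprimeTriples (n : ℕ) : (coprimeTriples K n).Finite :=
  (finite_monicTriples n).subset fun _ ⟨⟨hd, hs, ht, _⟩, hdeg⟩ => ⟨⟨hd, hs, ht⟩, hdeg⟩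

theorem ncard_monicTriples_eq_sum (n : ℕ) :
    (monicTriples K n).ncard = ∑ ij ∈ antidiagonal n,
      {g : K[X] | g.Monic ∧ 2 * g.natDegree = ij.1}.ncard * (coprimeTriples K ij.2).ncard := by
  refine Eq.trans ?_ (ncard_setOf_prod_weight_eq_sum_antidiagonal
    finite_setOf_monic_two_mul_natDegree_eq finite_coprimeTriples n)
  refine (Set.ncard_congr (fun y _ => (y.2.1, y.1 * y.2.2.1, y.1 * y.2.2.2)) ?_ ?_ ?_).symm
  · rintro ⟨g, d, s, t⟩ ⟨⟨hg, hd, hs, ht, -⟩, hdeg⟩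
    dsimp only at hg hd hs ht hdeg
    refine ⟨⟨hd, hg.mul hs, hg.mul ht⟩, ?_⟩
    dsimp only
    rw [hg.natDegree_mul hs, hg.natDegree_mul ht]
    omega
  · rintro ⟨g, d, s, t⟩ ⟨g', d', s', t'⟩ ⟨⟨hg, -, -, -, hst⟩, -⟩ ⟨⟨hg', -, -, -, hst'⟩, -⟩ h
    simp only [Prod.mk.injEq] at h
    obtain ⟨rfl, hs, ht⟩ := h
    obtain ⟨rfl, rfl, rfl⟩ := hg.eq_of_mul_eq_mul_of_isCoprime hg' hst hst' hs ht
    rfl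
  · rintro ⟨d, S, T⟩ ⟨⟨hd, hS, hT⟩, hdeg⟩
    dsimp only at hd hS hT hdeg
    obtain ⟨g, s, t, hg, hs, ht, hst, rfl, rfl⟩ := hS.exists_eq_mul_eq_mul_isCoprime hT
    refine ⟨(g, d, s, t), ⟨⟨hg, hd, hs, ht, hst⟩, ?_⟩, rfl⟩
    dsimp only
    rw [hg.natDegree_mul hs, hg.natDegree_mul ht] at hdeg
    omega

theorem ncard_monicTriples_add_two (n : ℕ) :
    (monicTriples K (n + 2)).ncard =
      (coprimeTriples K (n + 2)).ncard + Fintype.card K * (monicTriples K n).ncard := by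
  have hG : ∀ i, {g : K[X] | g.Monic ∧ 2 * g.natDegree = i + 2}.ncard =
      Fintype.card K * {g : K[X] | g.Monic ∧ 2 * g.natDegree = i}.ncard := by
    intro i
    rw [ncard_setOf_monic_two_mul_natDegree_eq, ncard_setOf_monic_two_mul_natDegree_eq]
    rcases Nat.even_or_odd i with hi | hi
    · simp [hi, Nat.even_add, show (i + 2) / 2 = i / 2 + 1 by omega, pow_succ, mul_comm]
    · simp [Nat.even_add, Nat.not_even_iff_odd.2 hi]
  have hG₀ : {g : K[X] | g.Monic ∧ 2 * g.natDegree = 0}.ncard = 1 := by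
    rw [ncard_setOf_monic_two_mul_natDegree_eq]
    simp
  have hG₁ : {g : K[X] | g.Monic ∧ 2 * g.natDegree = 1}.ncard = 0 := by
    rw [ncard_setOf_monic_two_mul_natDegree_eq]
    simp
  simp_rw [ncard_monicTriples_eq_sum, Finset.Nat.sum_antidiagonal_succ, zero_add, hG₀, hG₁, hG,
    mul_sum, mul_assoc]
  ring

theorem ncard_monicTriples_of_lt_two {n : ℕ} (hn : n < 2) :
    (monicTriples K n).ncard = (coprimeTriples K n).ncard := by
  interval_cases n <;> simp [ncard_monicTriples_eq_sum, Finset.Nat.sum_antidiagonal_succ,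
    ncard_setOf_monic_two_mul_natDegree_eq]

theorem two_mul_card_mul_ncard_coprimeTriples (n : ℕ) :
    2 * Fintype.card K * (coprimeTriples K n).ncard + n ^ 2 * Fintype.card K ^ n =
      (n + 1) * (n + 2) * Fintype.card K ^ (n + 1) + n * Fintype.card K ^ n := by
  rcases lt_or_ge n 2 with hn | hn
  · have hA := two_mul_ncard_monicTriples (K := K) n
    rw [ncard_monicTriples_of_lt_two hn] at hA
    interval_cases n <;> linear_combination Fintype.card K * hA
  · obtain ⟨n, rfl⟩ := Nat.exists_eq_add_of_le' hn
    have hrec := ncard_monicTriples_add_two (K := K) n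
    have h₁ := two_mul_ncard_monicTriples (K := K) (n + 2)
    have h₂ := two_mul_ncard_monicTriples (K := K) n
    linear_combination Fintype.card K * h₁ - Fintype.card K ^ 2 * h₂ - 2 * Fintype.card K * hrec

end Counting

theorem dk_two_eq_ncard {K : Type} [Field K] [Fintype K] (g : K[X]) :
    dk K 2 g = {p : K[X] × K[X] | p.1.Monic ∧ p.2.Monic ∧ p.1 * p.2 = g}.ncard := by
  rw [dk, ← Nat.card_coe_set_eq]
  exact Nat.card_congr <| Equiv.subtypeEquiv (piFinTwoEquiv fun _ => K[X]) fun t => by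
    simp [Fin.forall_fin_two, Fin.prod_univ_two, and_assoc]

theorem finsum_dk_two_sq_eq_ncard_coprimeTriples {K : Type} [Field K] [Fintype K] (n : ℕ) :
    ∑ᶠ f ∈ {f : K[X] | f.Monic ∧ f.natDegree = n}, dk K 2 (f ^ 2) =
      (coprimeTriples K n).ncard := by
  simp_rw [dk_two_eq_ncard]
  rw [(finite_setOf_monic_natDegree_eq n).finsum_ncard_eq_ncard_setOf_prod
    fun f _ => finite_setOf_monic_mul_eq (f ^ 2)]
  refine (Set.ncard_congr (fun x _ => (x.1 * x.2.1 * x.2.2, x.1 * x.2.1 ^ 2, x.1 * x.2.2 ^ 2))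
    ?_ ?_ ?_).symm
  · rintro ⟨d, s, t⟩ ⟨⟨hd, hs, ht, -⟩, hdeg⟩
    dsimp only at hd hs ht hdeg
    refine ⟨⟨(hd.mul hs).mul ht, ?_⟩, hd.mul (hs.pow 2), hd.mul (ht.pow 2), by ring⟩
    dsimp only
    rw [(hd.mul hs).natDegree_mul ht, hd.natDegree_mul hs]
    omega
  · rintro ⟨d, s, t⟩ ⟨d', s', t'⟩ ⟨⟨hd, hs, ht, hst⟩, -⟩ ⟨⟨hd', hs', ht', hst'⟩, -⟩ h
    dsimp only at hd hs ht hst hd' hs' ht' hst'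
    simp only [Prod.mk.injEq] at h
    obtain ⟨rfl, hs2, ht2⟩ := hd.eq_of_mul_eq_mul_of_isCoprime hd' (hst.pow (m := 2) (n := 2))
      (hst'.pow (m := 2) (n := 2)) h.2.1 h.2.2
    rw [hs.eq_of_pow_eq_pow hs' two_ne_zero hs2, ht.eq_of_pow_eq_pow ht' two_ne_zero ht2]
  · rintro ⟨f, a, b⟩ ⟨⟨hf, rfl⟩, ha, hb, hab⟩
    dsimp only at hf ha hb hab
    obtain ⟨d, s, t, hd, hs, ht, hst, rfl, rfl, rfl⟩ := ha.exists_eq_mul_sq_of_mul_eq_sq hb hf hab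
    refine ⟨(d, s, t), ⟨⟨hd, hs, ht, hst⟩, ?_⟩, rfl⟩
    dsimp only
    rw [(hd.mul hs).natDegree_mul ht, hd.natDegree_mul hs]
    omega

theorem sum_d2_sq_general (F : Type) [Field F] [Fintype F] (n : ℕ) :
    ∑ᶠ f ∈ {f : Polynomial F | f.Monic ∧ f.natDegree = n}, (dk F 2 (f ^ 2) : ℝ) =
      (1 + (1 / 2) * (3 + (Fintype.card F : ℝ)⁻¹) * (n : ℝ)
         + (1 / 2) * (1 - (Fintype.card F : ℝ)⁻¹) * (n : ℝ) ^ 2) *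
        (Fintype.card F : ℝ) ^ n := by
  rw [← Nat.cast_finsum_mem (finite_setOf_monic_natDegree_eq n),
    finsum_dk_two_sq_eq_ncard_coprimeTriples]
  have h : (2 * Fintype.card F * (coprimeTriples F n).ncard + n ^ 2 * Fintype.card F ^ n : ℝ) =
      (n + 1) * (n + 2) * Fintype.card F ^ (n + 1) + n * Fintype.card F ^ n := by
    exact_mod_cast two_mul_card_mul_ncard_coprimeTriples n
  field_simp
  linear_combination h

/-- exact evaluation of `∑_{deg f = n} d_2(f²)`. -/
theorem sum_d2_sq (F : Type) [Field F] [Fintype F] (hq : Odd (Fintype.card F)) (n : ℕ) :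
    ∑ᶠ f ∈ {f : Polynomial F | f.Monic ∧ f.natDegree = n}, (dk F 2 (f ^ 2) : ℝ) =
      (1 + (1 / 2) * (3 + (Fintype.card F : ℝ)⁻¹) * (n : ℝ)
         + (1 / 2) * (1 - (Fintype.card F : ℝ)⁻¹) * (n : ℝ) ^ 2) *
        (Fintype.card F : ℝ) ^ n :=
  sum_d2_sq_general F n

end
end

section
/- There exists a constant c > 1 (depending only on q) such that for every integer k ≥ 3, a_k = ∑_{f monic in A} d_k(f²)/|f|² ≤ c^{k · ln ln k}. -/
/-!
Write `f² = t₁ ⋯ tₖ` and record, for each monic irreducible `P`, the vector of exponents of `P`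
in `t₁, …, tₖ`. These vectors determine the tuple, and each has an even coordinate sum, so every
partial sum of `a_k` is at most `∏_P E(|P|⁻¹)`, where `E(u)` sums `u ^ (v₁ + ⋯ + vₖ)` over the
`v ∈ ℕᵏ` with even coordinate sum. By parity `2 E(u) = G(u)ᵏ + G(-u)ᵏ` for a geometric series `G`,
whence `E(u) ≤ exp (min (2ku) (3k²u²))`. There are at most `qⁿ / n` primes of degree `n`: the
degrees with `qⁿ > k` contribute `O(k)` through the geometric decay of `k² q⁻ⁿ`, and the
`log_q k` remaining degrees contribute `∑ 2k / n ≤ 2k (2 + log log k)`. Hence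
`a_k ≤ exp (10k + 2k log log k)`, and `log log k ≥ 1/12` for `k ≥ 3`.
-/

open Polynomial
open scoped Classical

noncomputable section

variable (F : Type) [Field F] [Fintype F]

open Finset Real UniqueFactorizationMonoid

section EvenPowerSum

/-- The local factor `∑ⱼ d_k(P^{2j}) u^{2j}` of `a_k`, with the exponents in `t₁ ⋯ tₖ = P^{2j}`
truncated below `L`. -/
def evenPowerSum (k L : ℕ) (u : ℝ) : ℝ :=
  ∑ v ∈ Fintype.piFinset (fun _ : Fin k => range L) with Even (∑ i, v i), u ^ ∑ i, v i

lemma sum_piFinset_range_pow_sum {R : Type*} [CommSemiring R] (k L : ℕ) (x : R) :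
    ∑ v ∈ Fintype.piFinset (fun _ : Fin k => range L), x ^ ∑ i, v i =
      (∑ e ∈ range L, x ^ e) ^ k := by
  simp_rw [← prod_pow_eq_pow_sum, ← prod_univ_sum, prod_const, card_univ, Fintype.card_fin]

lemma two_mul_evenPowerSum (k L : ℕ) (u : ℝ) :
    2 * evenPowerSum k L u = (∑ e ∈ range L, u ^ e) ^ k + (∑ e ∈ range L, (-u) ^ e) ^ k := by
  rw [← sum_piFinset_range_pow_sum, ← sum_piFinset_range_pow_sum, ← sum_add_distrib,
    ← sum_filter_add_sum_filter_not _ (fun v => Even (∑ i, v i)), evenPowerSum, mul_sum]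
  have hodd : ∀ v ∈ (Fintype.piFinset fun _ : Fin k => range L).filter
      (fun v => ¬Even (∑ i, v i)), u ^ ∑ i, v i + (-u) ^ ∑ i, v i = 0 := fun v hv => by
    rw [(Nat.not_even_iff_odd.mp (mem_filter.mp hv).2).neg_pow, add_neg_cancel]
  rw [sum_eq_zero hodd, add_zero]
  refine sum_congr rfl fun v hv => ?_
  rw [(mem_filter.mp hv).2.neg_pow, two_mul]

lemma inv_one_sub_le_exp {x : ℝ} (hx : x ≤ 1 / 2) : (1 - x)⁻¹ ≤ exp (x + 2 * x ^ 2) :=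
  calc (1 - x)⁻¹ ≤ x + 2 * x ^ 2 + 1 := by
        rw [inv_le_iff_one_le_mul₀ (by linarith)]
        nlinarith [sq_nonneg x]
    _ ≤ exp (x + 2 * x ^ 2) := add_one_le_exp _

lemma geom_sum_le_exp {x : ℝ} (hx : x ≤ 1 / 2) {L : ℕ} (hL : Even L) :
    ∑ e ∈ range L, x ^ e ≤ exp (x + 2 * x ^ 2) :=
  calc ∑ e ∈ range L, x ^ e = (1 - x ^ L) * (1 - x)⁻¹ := by
        rw [← div_eq_mul_inv, eq_div_iff (by linarith), geom_sum_mul_neg]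
    _ ≤ (1 - x)⁻¹ :=
        mul_le_of_le_one_left (inv_nonneg.mpr (by linarith)) (by linarith [hL.pow_nonneg x])
    _ ≤ exp (x + 2 * x ^ 2) := inv_one_sub_le_exp hx

lemma geom_sum_pow_le_exp {x : ℝ} (hx : |x| ≤ 1 / 2) {L : ℕ} (hL : Even L) (k : ℕ) :
    (∑ e ∈ range L, x ^ e) ^ k ≤ exp (k * (x + 2 * x ^ 2)) := by
  have hnonneg : 0 ≤ ∑ e ∈ range L, x ^ e := by
    rcases eq_or_ne L 0 with rfl | hL0
    · simp
    · exact (geom_sum_pos' (by linarith [neg_abs_le x]) hL0).le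
  rw [exp_nat_mul]
  exact pow_le_pow_left₀ hnonneg (geom_sum_le_exp (le_of_abs_le hx) hL) k

lemma two_mul_evenPowerSum_le {u : ℝ} (hu : |u| ≤ 1 / 2) {L : ℕ} (hL : Even L) (k : ℕ) :
    2 * evenPowerSum k L u ≤ exp (k * (u + 2 * u ^ 2)) + exp (k * (-u + 2 * u ^ 2)) := by
  rw [two_mul_evenPowerSum]
  have h := geom_sum_pow_le_exp (x := -u) (by rwa [abs_neg]) hL k
  rw [neg_sq] at h
  exact add_le_add (geom_sum_pow_le_exp hu hL k) h

lemma evenPowerSum_le_exp_sq {u : ℝ} (hu : |u| ≤ 1 / 2) {L : ℕ} (hL : Even L) (k : ℕ) :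
    evenPowerSum k L u ≤ exp (3 * (k * u) ^ 2) := by
  have hk : (k : ℝ) ≤ k ^ 2 := by exact_mod_cast Nat.le_self_pow two_ne_zero k
  have hcosh : exp (k * (u + 2 * u ^ 2)) + exp (k * (-u + 2 * u ^ 2)) =
      2 * (exp (2 * k * u ^ 2) * cosh (k * u)) := by
    have hsplit : ∀ s : ℝ, exp (k * (s + 2 * u ^ 2)) = exp (2 * k * u ^ 2) * exp (k * s) :=
      fun s => by rw [← exp_add]; ring_nf
    rw [hsplit, hsplit, cosh_eq, mul_neg]
    ring
  have hle := two_mul_evenPowerSum_le hu hL k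
  rw [hcosh] at hle
  calc evenPowerSum k L u ≤ exp (2 * k * u ^ 2) * cosh (k * u) := by linarith
    _ ≤ exp (2 * k * u ^ 2) * exp ((k * u) ^ 2 / 2) :=
        mul_le_mul_of_nonneg_left (cosh_le_exp_half_sq _) (exp_pos _).le
    _ ≤ exp (3 * (k * u) ^ 2) := by
        rw [← exp_add]
        gcongr
        nlinarith [sq_nonneg u, mul_le_mul_of_nonneg_right hk (sq_nonneg u)]

lemma evenPowerSum_le_exp {u : ℝ} (hu : |u| ≤ 1 / 2) {L : ℕ} (hL : Even L) (k : ℕ) :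
    evenPowerSum k L u ≤ exp (2 * k * |u|) := by
  have hsq : 2 * u ^ 2 ≤ |u| := by
    rw [← sq_abs]; nlinarith [abs_nonneg u]
  have h₁ : exp (k * (u + 2 * u ^ 2)) ≤ exp (2 * k * |u|) :=
    exp_le_exp.mpr (by nlinarith [le_abs_self u, k.cast_nonneg (α := ℝ)])
  have h₂ : exp (k * (-u + 2 * u ^ 2)) ≤ exp (2 * k * |u|) :=
    exp_le_exp.mpr (by nlinarith [neg_abs_le u, k.cast_nonneg (α := ℝ)])
  linarith [two_mul_evenPowerSum_le hu hL k]

lemma evenPowerSum_nonneg {u : ℝ} (hu : 0 ≤ u) (k L : ℕ) : 0 ≤ evenPowerSum k L u :=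
  sum_nonneg fun _ _ => pow_nonneg hu _

lemma evenPowerSum_le_exp_min {u : ℝ} (hu : |u| ≤ 1 / 2) {L : ℕ} (hL : Even L) (k : ℕ) :
    evenPowerSum k L u ≤ exp (min (2 * k * |u|) (3 * (k * u) ^ 2)) := by
  rw [exp_monotone.map_min]
  exact le_min (evenPowerSum_le_exp hu hL k) (evenPowerSum_le_exp_sq hu hL k)

end EvenPowerSum

section DegreeSums

variable {q k : ℕ}

lemma one_le_log_of_three_le (hk : 3 ≤ k) : 1 ≤ log k := by
  rw [le_log_iff_exp_le (by positivity)]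
  calc exp 1 ≤ 3 := by linarith [exp_one_lt_d9]
    _ ≤ k := by exact_mod_cast hk

lemma harmonic_log_le (hq : 2 ≤ q) (hk : 3 ≤ k) :
    (harmonic (Nat.log q k) : ℝ) ≤ 2 + log (log k) := by
  set m := Nat.log q k
  have hlogk := one_le_log_of_three_le hk
  have hm : (m : ℝ) ≤ 2 * log k := by
    have hqm : ((q ^ m : ℕ) : ℝ) ≤ k := by exact_mod_cast Nat.pow_log_le_self q (by omega)
    have hlog : m * log 2 ≤ log k :=
      calc m * log 2 ≤ m * log q := by gcongr; exact_mod_cast hq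
        _ = log ((q ^ m : ℕ) : ℝ) := by push_cast; rw [log_pow]
        _ ≤ log k := log_le_log (by positivity) hqm
    nlinarith [log_two_gt_d9, m.cast_nonneg (α := ℝ)]
  refine (harmonic_le_one_add_log m).trans ?_
  rcases Nat.eq_zero_or_pos m with hm0 | hm0
  · rw [hm0, Nat.cast_zero, log_zero]
    linarith [log_nonneg hlogk]
  · calc 1 + log m ≤ 1 + log (2 * log k) := by gcongr
      _ = 1 + log 2 + log (log k) := by rw [log_mul two_ne_zero (by positivity), add_assoc]
      _ ≤ 2 + log (log k) := by linarith [log_two_lt_d9]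

lemma sum_mul_inv_pow_le_two (hq : 2 ≤ q) (s : Finset ℕ) (hs : ∀ n ∈ s, Nat.log q k < n) :
    ∑ n ∈ s, k * ((q : ℝ) ^ n)⁻¹ ≤ 2 := by
  set m := Nat.log q k
  set r : ℝ := (q : ℝ)⁻¹
  have hr : r ≤ 1 / 2 := by
    rw [one_div]; exact inv_anti₀ two_pos (by exact_mod_cast hq)
  have hr0 : 0 ≤ r := by positivity
  have hsub : s ⊆ Ico (m + 1) (s.sup id + 1) := fun n hn =>
    mem_Ico.mpr ⟨hs n hn, Nat.lt_succ_of_le (le_sup (f := id) hn)⟩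
  have hkq : (k : ℝ) * r ^ (m + 1) ≤ 1 := by
    rw [inv_pow, ← div_eq_mul_inv, div_le_one (by positivity)]
    exact_mod_cast (Nat.lt_pow_succ_log_self (by omega) k).le
  calc ∑ n ∈ s, k * ((q : ℝ) ^ n)⁻¹ = k * ∑ n ∈ s, r ^ n := by
        rw [mul_sum]; exact sum_congr rfl fun n _ => by rw [inv_pow]
    _ ≤ k * ∑ n ∈ Ico (m + 1) (s.sup id + 1), r ^ n := by
        gcongr
    _ ≤ k * (r ^ (m + 1) / (1 - r)) := by
        gcongr; exact geom_sum_Ico_le_of_lt_one hr0 (by linarith)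
    _ ≤ k * (2 * r ^ (m + 1)) := by
        gcongr; rw [div_le_iff₀ (by linarith)]; nlinarith [pow_nonneg hr0 (m + 1)]
    _ ≤ 2 := by linarith

lemma sum_Icc_mul_min_le (hq : 2 ≤ q) (hk : 3 ≤ k) (N : ℕ) :
    ∑ n ∈ Icc 1 N, (q : ℝ) ^ n / n * min (2 * k * ((q : ℝ) ^ n)⁻¹) (3 * (k * ((q : ℝ) ^ n)⁻¹) ^ 2)
      ≤ 10 * k + 2 * k * log (log k) := by
  set m := Nat.log q k
  set φ : ℕ → ℝ := fun n =>
    (q : ℝ) ^ n / n * min (2 * k * ((q : ℝ) ^ n)⁻¹) (3 * (k * ((q : ℝ) ^ n)⁻¹) ^ 2)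
  have hqn : ∀ n, 0 < (q : ℝ) ^ n := fun n => pow_pos (by exact_mod_cast (by omega : 0 < q)) n
  have hsmall : ∑ n ∈ Icc 1 N with n ≤ m, φ n ≤ 2 * k * (2 + log (log k)) :=
    calc ∑ n ∈ Icc 1 N with n ≤ m, φ n ≤ ∑ n ∈ Icc 1 N with n ≤ m, 2 * k * (n : ℝ)⁻¹ := by
          refine sum_le_sum fun n _ => ?_
          calc φ n ≤ (q : ℝ) ^ n / n * (2 * k * ((q : ℝ) ^ n)⁻¹) := by
                exact mul_le_mul_of_nonneg_left (min_le_left _ _) (by positivity)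
            _ = 2 * k * (n : ℝ)⁻¹ := by field_simp [(hqn n).ne']
      _ ≤ ∑ n ∈ Icc 1 m, 2 * k * (n : ℝ)⁻¹ := by
          refine sum_le_sum_of_subset_of_nonneg (fun n hn => ?_) fun n _ _ => by positivity
          simp only [mem_filter, mem_Icc] at hn ⊢
          omega
      _ = 2 * k * harmonic m := by
          rw [harmonic_eq_sum_Icc, ← mul_sum]; push_cast; rfl
      _ ≤ 2 * k * (2 + log (log k)) := by gcongr; exact harmonic_log_le hq hk
  have hlarge : ∑ n ∈ Icc 1 N with ¬n ≤ m, φ n ≤ 6 * k :=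
    calc ∑ n ∈ Icc 1 N with ¬n ≤ m, φ n
        ≤ ∑ n ∈ Icc 1 N with ¬n ≤ m, 3 * k * (k * ((q : ℝ) ^ n)⁻¹) := by
          refine sum_le_sum fun n hn => ?_
          have hn1 : (1 : ℝ) ≤ n := by exact_mod_cast (mem_Icc.mp (mem_filter.mp hn).1).1
          calc φ n ≤ (q : ℝ) ^ n / n * (3 * (k * ((q : ℝ) ^ n)⁻¹) ^ 2) := by
                exact mul_le_mul_of_nonneg_left (min_le_right _ _) (by positivity)
            _ = 3 * k * (k * ((q : ℝ) ^ n)⁻¹) / n := by field_simp [(hqn n).ne']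
            _ ≤ 3 * k * (k * ((q : ℝ) ^ n)⁻¹) := div_le_self (by positivity) hn1
      _ = 3 * k * ∑ n ∈ Icc 1 N with ¬n ≤ m, k * ((q : ℝ) ^ n)⁻¹ := by rw [mul_sum]
      _ ≤ 3 * k * 2 := by
          gcongr
          exact sum_mul_inv_pow_le_two hq _ fun n hn => not_le.mp (mem_filter.mp hn).2
      _ = 6 * k := by ring
  rw [← sum_filter_add_sum_filter_not _ (· ≤ m)]
  linarith

lemma one_div_twelve_le_log_log (hk : 3 ≤ k) : 1 / 12 ≤ log (log k) := by
  have hlog3 : log 3 ≤ log k := log_le_log (by norm_num) (by exact_mod_cast hk)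
  have hlogk : 1.0986 ≤ log k := by linarith [log_three_gt_d9]
  have hinv : (log k)⁻¹ ≤ 11 / 12 := by
    rw [inv_le_comm₀ (by linarith) (by norm_num)]
    linarith
  calc (1 : ℝ) / 12 ≤ 1 - (log k)⁻¹ := by linarith
    _ ≤ log (log k) := one_sub_inv_le_log_of_pos (by linarith)

end DegreeSums

namespace UniqueFactorizationMonoid

variable {α : Type*} [CommMonoidWithZero α] [UniqueFactorizationMonoid α] [DecidableEq α]

lemma prod_pow_count_normalizedFactors [StrongNormalizationMonoid α] {a : α} (ha : a ≠ 0)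
    {s : Finset α} (hs : (normalizedFactors a).toFinset ⊆ s) :
    ∏ p ∈ s, p ^ (normalizedFactors a).count p = normalize a := by
  rw [← prod_normalizedFactors_eq ha, prod_multiset_count]
  refine (prod_subset hs fun p _ hp => ?_).symm
  rw [Multiset.count_eq_zero_of_notMem (mt Multiset.mem_toFinset.mpr hp), pow_zero]

lemma count_normalizedFactors_prod [NormalizationMonoid α] {ι : Type*} (s : Finset ι)
    {f : ι → α} (hf : ∀ i ∈ s, f i ≠ 0) (p : α) :
    (normalizedFactors (∏ i ∈ s, f i)).count p = ∑ i ∈ s, (normalizedFactors (f i)).count p := by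
  rw [prod_eq_multiset_prod, normalizedFactors_multiset_prod _ (by simpa using hf),
    Multiset.map_map, ← sum_eq_multiset_sum, Multiset.count_sum']
  rfl

lemma even_sum_count_normalizedFactors [NormalizationMonoid α] {ι : Type*} [Fintype ι]
    {t : ι → α} (ht : ∀ i, t i ≠ 0) {a : α} (h : ∏ i, t i = a ^ 2) (p : α) :
    Even (∑ i, (normalizedFactors (t i)).count p) := by
  rw [← count_normalizedFactors_prod _ fun i _ => ht i, h, normalizedFactors_pow,
    Multiset.count_nsmul]
  exact even_two_mul _

end UniqueFactorizationMonoid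

namespace Polynomial

variable {K : Type*} [Field K]

lemma Monic.eq_of_pow_eq {f g : K[X]} (hf : f.Monic) (hg : g.Monic)
    {n : ℕ} (hn : n ≠ 0) (h : f ^ n = g ^ n) : f = g := by
  have hfactors : normalizedFactors f = normalizedFactors g :=
    nsmul_right_injective hn <| by
      simpa only [normalizedFactors_pow] using congrArg normalizedFactors h
  rw [← hf.normalize_eq_self, ← hg.normalize_eq_self, ← prod_normalizedFactors_eq hf.ne_zero,
    ← prod_normalizedFactors_eq hg.ne_zero, hfactors]

lemma natDegree_le_of_prod_eq {ι : Type*} [Fintype ι] {t : ι → K[X]} {g : K[X]} (hg : g ≠ 0)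
    (ht : ∏ i, t i = g) (i : ι) : (t i).natDegree ≤ g.natDegree :=
  natDegree_le_of_dvd (ht ▸ dvd_prod_of_mem t (mem_univ i)) hg

variable [DecidableEq K[X]]

lemma Monic.prod_pow_count_normalizedFactors {g : K[X]} (hg : g.Monic) {s : Finset K[X]}
    (hs : (normalizedFactors g).toFinset ⊆ s) :
    ∏ P ∈ s, P ^ (normalizedFactors g).count P = g := by
  rw [UniqueFactorizationMonoid.prod_pow_count_normalizedFactors hg.ne_zero hs,
    hg.normalize_eq_self]

lemma Monic.eq_of_count_normalizedFactors_eq {g h : K[X]} (hg : g.Monic) (hh : h.Monic)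
    {s : Finset K[X]} (hgs : (normalizedFactors g).toFinset ⊆ s)
    (hhs : (normalizedFactors h).toFinset ⊆ s)
    (hc : ∀ P ∈ s, (normalizedFactors g).count P = (normalizedFactors h).count P) : g = h := by
  rw [← hg.prod_pow_count_normalizedFactors hgs, ← hh.prod_pow_count_normalizedFactors hhs]
  exact prod_congr rfl fun P hP => by rw [hc P hP]

lemma Monic.count_normalizedFactors_le_natDegree {g : K[X]} (hg : g.Monic) (P : K[X]) :
    (normalizedFactors g).count P ≤ g.natDegree := by
  by_cases hP : P ∈ normalizedFactors g
  · have hdvd : P ^ (normalizedFactors g).count P ∣ g := by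
      conv_rhs => rw [← hg.prod_pow_count_normalizedFactors subset_rfl]
      exact dvd_prod_of_mem _ (Multiset.mem_toFinset.mpr hP)
    calc (normalizedFactors g).count P
        ≤ (normalizedFactors g).count P * P.natDegree :=
          Nat.le_mul_of_pos_right _ (irreducible_of_normalized_factor P hP).natDegree_pos
      _ = (P ^ (normalizedFactors g).count P).natDegree := (Polynomial.natDegree_pow P _).symm
      _ ≤ g.natDegree := natDegree_le_of_dvd hdvd hg.ne_zero
  · rw [Multiset.count_eq_zero_of_notMem hP]
    exact Nat.zero_le _

end Polynomial

section FiniteField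

variable {F}

lemma finite_setOf_natDegree_le (N : ℕ) : {p : F[X] | p.natDegree ≤ N}.Finite := by
  have : Finite (degreeLE F N) :=
    (degreeLT_succ_eq_degreeLE (R := F)) ▸ Module.finite_of_finite F
  convert (degreeLE F N : Set F[X]).toFinite using 1
  ext p
  simp [mem_degreeLE, natDegree_le_iff_degree_le]

variable (F) in
def primesDegLE (N : ℕ) : Finset F[X] :=
  (finite_setOf_natDegree_le N).toFinset.filter fun P => P.Monic ∧ Irreducible P

lemma mem_primesDegLE {N : ℕ} {P : F[X]} :
    P ∈ primesDegLE F N ↔ P.Monic ∧ Irreducible P ∧ P.natDegree ≤ N := by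
  simp only [primesDegLE, mem_filter, Set.Finite.mem_toFinset, Set.mem_ofPred_eq]
  tauto

lemma pnorm_pos (f : F[X]) : 0 < pnorm F f := by
  unfold pnorm; positivity

lemma pnorm_pow (f : F[X]) (n : ℕ) : pnorm F (f ^ n) = pnorm F f ^ n := by
  rw [pnorm, pnorm, natDegree_pow, pow_mul']

lemma pnorm_prod {ι : Type*} (s : Finset ι) {t : ι → F[X]} (ht : ∀ i ∈ s, t i ≠ 0) :
    pnorm F (∏ i ∈ s, t i) = ∏ i ∈ s, pnorm F (t i) := by
  rw [pnorm, natDegree_prod s t ht, ← prod_pow_eq_pow_sum]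
  rfl

lemma pnorm_eq_prod_pow_count {g : F[X]} (hg : g.Monic) {s : Finset F[X]}
    (hs : (normalizedFactors g).toFinset ⊆ s) :
    pnorm F g = ∏ P ∈ s, pnorm F P ^ (normalizedFactors g).count P := by
  conv_lhs => rw [← hg.prod_pow_count_normalizedFactors hs]
  rw [pnorm_prod]
  · simp_rw [pnorm_pow]
  · intro P _
    rcases eq_or_ne P 0 with rfl | hP
    · simp [Multiset.count_eq_zero_of_notMem (zero_notMem_normalizedFactors g)]
    · exact pow_ne_zero _ hP

lemma pnorm_prod_eq_prod_pow_sum_count {ι : Type*} [Fintype ι] {t : ι → F[X]}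
    (ht : ∀ i, (t i).Monic) {s : Finset F[X]} (hs : ∀ i, (normalizedFactors (t i)).toFinset ⊆ s) :
    pnorm F (∏ i, t i) = ∏ P ∈ s, pnorm F P ^ ∑ i, (normalizedFactors (t i)).count P := by
  rw [pnorm_prod _ fun i _ => (ht i).ne_zero]
  simp_rw [pnorm_eq_prod_pow_count (ht _) (hs _)]
  rw [prod_comm]
  simp_rw [prod_pow_eq_pow_sum]

lemma mul_card_le_card_pow_of_irreducible {n : ℕ} (s : Finset F[X])
    (hs : ∀ P ∈ s, P.Monic ∧ Irreducible P ∧ P.natDegree = n) :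
    n * #s ≤ Fintype.card F ^ n := by
  rcases eq_or_ne n 0 with rfl | hn
  · simp
  have hq : 1 < Fintype.card F := Fintype.one_lt_card
  -- distinct monic irreducibles of degree `n` are coprime factors of `X ^ q ^ n - X`
  have hdvd : ∏ P ∈ s, P ∣ X ^ Fintype.card F ^ n - X := by
    refine prod_dvd_of_coprime (fun P hP Q hQ hPQ => ?_) fun P hP => ?_
    · refine ((hs P hP).2.1.coprime_iff_not_dvd).mpr fun hdvd => hPQ ?_
      exact eq_of_monic_of_associated (hs P hP).1 (hs Q hQ).1
        ((hs P hP).2.1.associated_of_dvd (hs Q hQ).2.1 hdvd)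
    · rw [← Nat.card_eq_fintype_card, ← (hs P hP).2.1.natDegree_dvd_iff_dvd_X_pow_card_pow_sub_X,
        (hs P hP).2.2]
  calc n * #s = (∏ P ∈ s, P).natDegree := by
        rw [natDegree_prod_of_monic _ _ fun P hP => (hs P hP).1,
          sum_congr rfl fun P hP => (hs P hP).2.2, sum_const, smul_eq_mul, mul_comm]
    _ ≤ (X ^ Fintype.card F ^ n - X : F[X]).natDegree :=
        natDegree_le_of_dvd hdvd (FiniteField.X_pow_card_pow_sub_X_ne_zero F hn hq)
    _ = Fintype.card F ^ n := FiniteField.X_pow_card_pow_sub_X_natDegree_eq F hn hq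

lemma sum_comp_natDegree_le_sum_Icc {N : ℕ} (s : Finset F[X])
    (hs : ∀ P ∈ s, P.Monic ∧ Irreducible P ∧ P.natDegree ≤ N) {φ : ℕ → ℝ} (hφ : ∀ n, 0 ≤ φ n) :
    ∑ P ∈ s, φ P.natDegree ≤ ∑ n ∈ Icc 1 N, (Fintype.card F : ℝ) ^ n / n * φ n := by
  rw [← sum_fiberwise_of_maps_to (g := natDegree) (t := Icc 1 N)
    fun P hP => mem_Icc.mpr ⟨(hs P hP).2.1.natDegree_pos, (hs P hP).2.2⟩]
  refine sum_le_sum fun n hn => ?_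
  have hcard := mul_card_le_card_pow_of_irreducible {P ∈ s | P.natDegree = n} fun P hP =>
    ⟨(hs P (mem_filter.mp hP).1).1, (hs P (mem_filter.mp hP).1).2.1, (mem_filter.mp hP).2⟩
  have hn0 : (0 : ℝ) < n := by exact_mod_cast (mem_Icc.mp hn).1
  rw [sum_congr rfl fun P hP => by rw [(mem_filter.mp hP).2], sum_const, nsmul_eq_mul]
  gcongr
  · exact hφ n
  · rw [le_div_iff₀ hn0, mul_comm]; exact_mod_cast hcard

end FiniteField

lemma Finset.sum_prod_le_prod_sum_of_injOn {R β κ γ : Type*} [CommSemiring R] [PartialOrder R]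
    [IsOrderedRing R] [Fintype κ] {s : Finset β} {e : β → κ → γ} (he : Set.InjOn e s)
    {V : Finset γ} (hV : ∀ x ∈ s, ∀ j, e x j ∈ V) {g : κ → γ → R} (hg : ∀ j v, 0 ≤ g j v) :
    ∑ x ∈ s, ∏ j, g j (e x j) ≤ ∏ j, ∑ v ∈ V, g j v := by
  classical
  rw [prod_univ_sum, ← sum_image (f := fun E => ∏ j, g j (E j)) he]
  refine sum_le_sum_of_subset_of_nonneg (fun E hE => ?_) fun E _ _ => prod_nonneg fun j _ => hg j _
  obtain ⟨x, hx, rfl⟩ := mem_image.mp hE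
  exact Fintype.mem_piFinset.mpr (hV x hx)

section EulerProduct

variable {F}

def sqFactorizations (k : ℕ) (f : F[X]) : Finset (Fin k → F[X]) :=
  {t ∈ Fintype.piFinset fun _ => (finite_setOf_natDegree_le (2 * f.natDegree)).toFinset |
    (∀ i, (t i).Monic) ∧ ∏ i, t i = f ^ 2}

lemma mem_sqFactorizations {k : ℕ} {f : F[X]} (hf : f ≠ 0) {t : Fin k → F[X]} :
    t ∈ sqFactorizations k f ↔ (∀ i, (t i).Monic) ∧ ∏ i, t i = f ^ 2 := by
  simp only [sqFactorizations, mem_filter, Fintype.mem_piFinset, Set.Finite.mem_toFinset,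
    Set.mem_ofPred_eq, and_iff_right_iff_imp]
  rintro ⟨-, ht⟩ i
  simpa only [natDegree_pow] using natDegree_le_of_prod_eq (pow_ne_zero 2 hf) ht i

lemma card_sqFactorizations (k : ℕ) {f : F[X]} (hf : f ≠ 0) :
    #(sqFactorizations k f) = dk F k (f ^ 2) := by
  rw [dk, ← Nat.card_eq_finsetCard]
  exact Nat.card_congr (Equiv.subtypeEquivRight fun t => mem_sqFactorizations hf)

lemma normalizedFactors_toFinset_subset_primesDegLE {f : F[X]} (hf : f ≠ 0) {N : ℕ}
    (hN : f.natDegree ≤ N) {ι : Type*} [Fintype ι] {t : ι → F[X]} (ht : ∏ i, t i = f ^ 2)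
    (i : ι) : (normalizedFactors (t i)).toFinset ⊆ primesDegLE F N := by
  intro P hP
  replace hP := Multiset.mem_toFinset.mp hP
  have hPf : P ∣ f := (prime_of_normalized_factor P hP).dvd_of_dvd_pow <|
    (dvd_of_mem_normalizedFactors hP).trans (ht ▸ dvd_prod_of_mem t (mem_univ i))
  exact mem_primesDegLE.mpr ⟨normalize_normalized_factor P hP ▸
    monic_normalize (prime_of_normalized_factor P hP).ne_zero,
    irreducible_of_normalized_factor P hP, (natDegree_le_of_dvd hPf hf).trans hN⟩

lemma sum_dk_sq_div_pnorm_eq_sum_sigma (k N : ℕ) (S : Finset F[X])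
    (hS : ∀ f ∈ S, f.Monic ∧ f.natDegree ≤ N) :
    ∑ f ∈ S, (dk F k (f ^ 2) : ℝ) / pnorm F (f ^ 2) =
      ∑ x ∈ S.sigma (sqFactorizations k), ∏ P : primesDegLE F N,
        (pnorm F P)⁻¹ ^ ∑ i, (normalizedFactors (x.2 i)).count (P : F[X]) := by
  rw [sum_sigma]
  refine sum_congr rfl fun f hf => ?_
  have hf0 := (hS f hf).1.ne_zero
  rw [← card_sqFactorizations k hf0, div_eq_mul_inv, ← nsmul_eq_mul, ← sum_const]
  refine sum_congr rfl fun t ht => ?_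
  obtain ⟨hmonic, hprod⟩ := (mem_sqFactorizations hf0).mp ht
  rw [← hprod, pnorm_prod_eq_prod_pow_sum_count hmonic
      (normalizedFactors_toFinset_subset_primesDegLE hf0 (hS f hf).2 hprod),
    ← prod_coe_sort, ← prod_inv_distrib]
  simp_rw [inv_pow]

lemma injOn_count_normalizedFactors (k N : ℕ) (S : Finset F[X])
    (hS : ∀ f ∈ S, f.Monic ∧ f.natDegree ≤ N) :
    Set.InjOn (fun (x : (_ : F[X]) × (Fin k → F[X])) (P : primesDegLE F N) (i : Fin k) =>
      (normalizedFactors (x.2 i)).count (P : F[X])) ↑(S.sigma (sqFactorizations k)) := by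
  rintro ⟨f, t⟩ hx ⟨f', t'⟩ hx' h
  obtain ⟨hf, ht⟩ := mem_sigma.mp hx
  obtain ⟨hf', ht'⟩ := mem_sigma.mp hx'
  obtain ⟨hmonic, hprod⟩ := (mem_sqFactorizations (hS f hf).1.ne_zero).mp ht
  obtain ⟨hmonic', hprod'⟩ := (mem_sqFactorizations (hS f' hf').1.ne_zero).mp ht'
  have htt : t = t' := funext fun i =>
    (hmonic i).eq_of_count_normalizedFactors_eq (hmonic' i)
      (normalizedFactors_toFinset_subset_primesDegLE (hS f hf).1.ne_zero (hS f hf).2 hprod i)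
      (normalizedFactors_toFinset_subset_primesDegLE (hS f' hf').1.ne_zero (hS f' hf').2 hprod' i)
      fun P hP => congrFun (congrFun h ⟨P, hP⟩) i
  subst htt
  rw [(hS f hf).1.eq_of_pow_eq (hS f' hf').1 two_ne_zero (hprod.symm.trans hprod')]

theorem sum_dk_sq_div_pnorm_le_prod (k N : ℕ) (S : Finset F[X])
    (hS : ∀ f ∈ S, f.Monic ∧ f.natDegree ≤ N) :
    ∑ f ∈ S, (dk F k (f ^ 2) : ℝ) / pnorm F (f ^ 2) ≤
      ∏ P ∈ primesDegLE F N, evenPowerSum k (2 * N + 2) (pnorm F P)⁻¹ := by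
  rw [sum_dk_sq_div_pnorm_eq_sum_sigma k N S hS, ← prod_coe_sort]
  refine sum_prod_le_prod_sum_of_injOn
    (g := fun (P : primesDegLE F N) (v : Fin k → ℕ) => (pnorm F P)⁻¹ ^ ∑ i, v i)
    (injOn_count_normalizedFactors k N S hS) (fun x hx P => ?_) fun P v =>
      pow_nonneg (inv_nonneg.mpr (pnorm_pos _).le) _
  obtain ⟨hf, ht⟩ := mem_sigma.mp hx
  obtain ⟨hmonic, hprod⟩ := (mem_sqFactorizations (hS _ hf).1.ne_zero).mp ht
  refine mem_filter.mpr ⟨Fintype.mem_piFinset.mpr fun i => mem_range.mpr ?_,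
    even_sum_count_normalizedFactors (fun i => (hmonic i).ne_zero) hprod _⟩
  have hdeg := natDegree_le_of_prod_eq (pow_ne_zero 2 (hS _ hf).1.ne_zero) hprod i
  rw [natDegree_pow] at hdeg
  linarith [(hmonic i).count_normalizedFactors_le_natDegree P, (hS _ hf).2]

lemma prod_evenPowerSum_le {k : ℕ} (hk : 3 ≤ k) (N : ℕ) {L : ℕ} (hL : Even L) :
    ∏ P ∈ primesDegLE F N, evenPowerSum k L (pnorm F P)⁻¹ ≤
      exp (10 * k + 2 * k * log (log k)) := by
  set q := Fintype.card F
  have hq : 2 ≤ q := Fintype.one_lt_card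
  set φ : ℕ → ℝ := fun n => min (2 * k * ((q : ℝ) ^ n)⁻¹) (3 * (k * ((q : ℝ) ^ n)⁻¹) ^ 2)
  have hlocal : ∀ P ∈ primesDegLE F N, evenPowerSum k L (pnorm F P)⁻¹ ≤ exp (φ P.natDegree) := by
    intro P hP
    have hu : 0 < (pnorm F P)⁻¹ := inv_pos.mpr (pnorm_pos P)
    have hu2 : (pnorm F P)⁻¹ ≤ 1 / 2 := by
      rw [one_div]
      refine inv_anti₀ two_pos ?_
      calc (2 : ℝ) ≤ q := by exact_mod_cast hq
        _ ≤ pnorm F P := le_self_pow₀ (by exact_mod_cast hq.trans' one_le_two)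
          (mem_primesDegLE.mp hP).2.1.natDegree_pos.ne'
    have hle := evenPowerSum_le_exp_min (by rwa [abs_of_pos hu]) hL k
    rwa [abs_of_pos hu] at hle
  calc ∏ P ∈ primesDegLE F N, evenPowerSum k L (pnorm F P)⁻¹
      ≤ ∏ P ∈ primesDegLE F N, exp (φ P.natDegree) :=
        prod_le_prod (fun P _ => evenPowerSum_nonneg (inv_nonneg.mpr (pnorm_pos P).le) k L) hlocal
    _ = exp (∑ P ∈ primesDegLE F N, φ P.natDegree) := (exp_sum _ _).symm
    _ ≤ exp (∑ n ∈ Icc 1 N, (q : ℝ) ^ n / n * φ n) :=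
        exp_le_exp.mpr <| sum_comp_natDegree_le_sum_Icc _ (fun P hP => mem_primesDegLE.mp hP)
          fun n => by positivity
    _ ≤ exp (10 * k + 2 * k * log (log k)) := exp_le_exp.mpr (sum_Icc_mul_min_le hq hk N)

end EulerProduct

theorem ak_bound_general (F : Type) [Field F] [Fintype F] :
    ∃ c > (1 : ℝ), ∀ k : ℕ, 3 ≤ k →
      (∑' f : {f : Polynomial F // f.Monic}, (dk F k (f.1 ^ 2) : ℝ) / (pnorm F f.1) ^ 2)
        ≤ c ^ ((k : ℝ) * Real.log (Real.log (k : ℝ))) := by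
  refine ⟨exp 122, one_lt_exp_iff.mpr (by norm_num), fun k hk => ?_⟩
  rw [← exp_mul]
  refine tsum_le_of_sum_le (fun f => div_nonneg (Nat.cast_nonneg _) (sq_nonneg _)) fun s => ?_
  set N := s.sup fun f => f.1.natDegree
  calc ∑ f ∈ s, (dk F k (f.1 ^ 2) : ℝ) / pnorm F f.1 ^ 2
      = ∑ f ∈ s.map (Function.Embedding.subtype _), (dk F k (f ^ 2) : ℝ) / pnorm F (f ^ 2) := by
        simp [pnorm_pow]
    _ ≤ ∏ P ∈ primesDegLE F N, evenPowerSum k (2 * N + 2) (pnorm F P)⁻¹ := by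
        refine sum_dk_sq_div_pnorm_le_prod k N _ fun f hf => ?_
        obtain ⟨f, hfs, rfl⟩ := mem_map.mp hf
        exact ⟨f.2, le_sup (f := fun f => f.1.natDegree) hfs⟩
    _ ≤ exp (10 * k + 2 * k * log (log k)) := prod_evenPowerSum_le hk N (by simp [parity_simps])
    _ ≤ exp (122 * (k * log (log k))) := by
        have hloglog := one_div_twelve_le_log_log hk
        have hk0 : (0 : ℝ) ≤ k := k.cast_nonneg
        gcongr
        nlinarith

/-- bound `a_k ≤ c^{k ln ln k}`. -/
theorem ak_bound (F : Type) [Field F] [Fintype F] (hq : Odd (Fintype.card F)) :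
    ∃ c > (1 : ℝ), ∀ k : ℕ, 3 ≤ k →
      (∑' f : {f : Polynomial F // f.Monic}, (dk F k (f.1 ^ 2) : ℝ) / (pnorm F f.1) ^ 2)
        ≤ c ^ ((k : ℝ) * Real.log (Real.log (k : ℝ))) :=
  ak_bound_general F

end
end
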